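/- The natural map N_n(F)g ↦ N_n(E)g induces a bijection from the coset space N_n(F)\GL_n(F) onto the set of Γ-fixed points of the coset space N_n(E)\GL_n(E). Concretely: (i) for g, g' ∈ GL_n(F), one has N_n(E)g = N_n(E)g' if and only if N_n(F)g = N_n(F)g'; and (ii) if g ∈ GL_n(E) is such that for every σ ∈ Γ there exists u_σ ∈ N_n(E) with σ(g) = u_σ · g, then there exists u ∈ N_n(E) such that every entry of u · g lies in F. -/
import Mathlib


/-- `N_n(R)`: the group of `n × n` unipotent upper triangular matrices, i.e. upper
triangular matrices whose diagonal entries are all `1`. -/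
def IsUnipotentUpperTriangular {R : Type*} [CommRing R] {n : ℕ}
    (a : Matrix (Fin n) (Fin n) R) : Prop :=
  (∀ i, a i i = 1) ∧ ∀ i j : Fin n, j < i → a i j = 0

namespace UUT

variable {R : Type*} [CommRing R] {n : ℕ}

lemma bt {a : Matrix (Fin n) (Fin n) R} (h : IsUnipotentUpperTriangular a) :
    a.BlockTriangular id := fun i j hij => h.2 i j hij

lemma one : IsUnipotentUpperTriangular (1 : Matrix (Fin n) (Fin n) R) :=
  ⟨fun i => Matrix.one_apply_eq i, fun _ _ hij => Matrix.one_apply_ne (ne_of_gt hij)⟩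

lemma mul {a b : Matrix (Fin n) (Fin n) R} (ha : IsUnipotentUpperTriangular a)
    (hb : IsUnipotentUpperTriangular b) : IsUnipotentUpperTriangular (a * b) := by
  refine ⟨?_, fun i j hij => ((bt ha).mul (bt hb)) (show (id j : Fin n) < id i from hij)⟩
  intro i
  rw [Matrix.mul_apply, Finset.sum_eq_single i]
  · rw [ha.1, hb.1, one_mul]
  · intro k _ hk
    rcases lt_or_gt_of_ne hk with h | h
    · rw [ha.2 i k h, zero_mul]
    · rw [hb.2 k i h, mul_zero]
  · exact fun h => absurd (Finset.mem_univ i) h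

lemma det_eq_one {a : Matrix (Fin n) (Fin n) R} (ha : IsUnipotentUpperTriangular a) :
    a.det = 1 := by
  rw [Matrix.det_of_upperTriangular (bt ha)]
  simp [ha.1]

lemma isUnit_det {a : Matrix (Fin n) (Fin n) R} (ha : IsUnipotentUpperTriangular a) :
    IsUnit a.det := det_eq_one ha ▸ isUnit_one

lemma inv {a : Matrix (Fin n) (Fin n) R} (ha : IsUnipotentUpperTriangular a) :
    IsUnipotentUpperTriangular a⁻¹ := by
  have : Invertible a := a.invertibleOfIsUnitDet (isUnit_det ha)
  have htri : a⁻¹.BlockTriangular id := Matrix.blockTriangular_inv_of_blockTriangular (bt ha)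
  refine ⟨?_, fun i j hij => htri (show (id j : Fin n) < id i from hij)⟩
  intro i
  have h1 : (a * a⁻¹) i i = 1 := by
    rw [Matrix.mul_nonsing_inv a (isUnit_det ha), Matrix.one_apply_eq]
  rw [Matrix.mul_apply, Finset.sum_eq_single i] at h1
  · rwa [ha.1, one_mul] at h1
  · intro k _ hk
    rcases lt_or_gt_of_ne hk with h | h
    · rw [ha.2 i k h, zero_mul]
    · rw [htri (show (id i : Fin n) < id k from h), mul_zero]
  · exact fun h => absurd (Finset.mem_univ i) h

end UUT

section Part2Aux

variable (F E : Type*) [Field F] [Field E] [Algebra F E]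

lemma map_mul_alg {n : ℕ} (σ : E ≃ₐ[F] E) (M N : Matrix (Fin n) (Fin n) E) :
    (M * N).map ⇑σ = M.map ⇑σ * N.map ⇑σ := by
  ext i j
  simp [Matrix.mul_apply, Matrix.map_apply, map_sum]

lemma hilbert90_additive [IsGalois F E] [FiniteDimensional F E]
    (c : (E ≃ₐ[F] E) → E) (hc : ∀ σ τ, c (σ * τ) = c σ + σ (c τ)) :
    ∃ b : E, ∀ σ, c σ = σ b - b := by
  obtain ⟨θ, hθ⟩ := Algebra.trace_surjective F E 1
  set S : E := ∑ τ : E ≃ₐ[F] E, c τ * τ θ with hS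
  have hsum : ∀ σ : E ≃ₐ[F] E, (∑ τ : E ≃ₐ[F] E, (σ * τ) θ) = 1 := by
    intro σ
    have h1 : (∑ τ : E ≃ₐ[F] E, (σ * τ) θ) = ∑ τ : E ≃ₐ[F] E, τ θ :=
      Fintype.sum_equiv (Equiv.mulLeft σ) _ _ (fun τ => rfl)
    rw [h1, ← trace_eq_sum_automorphisms, hθ, map_one]
  refine ⟨-S, fun σ => ?_⟩
  have key : σ S = S - c σ := by
    have : σ S = ∑ τ : E ≃ₐ[F] E, (c (σ * τ) - c σ) * ((σ * τ) θ) := by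
      rw [hS, map_sum]
      refine Finset.sum_congr rfl fun τ _ => ?_
      rw [map_mul, hc σ τ]
      ring_nf
      rfl
    rw [this]
    have h2 : ∑ τ : E ≃ₐ[F] E, (c (σ * τ) - c σ) * ((σ * τ) θ)
        = (∑ τ : E ≃ₐ[F] E, c (σ * τ) * ((σ * τ) θ)) - c σ * ∑ τ : E ≃ₐ[F] E, (σ * τ) θ := by
      rw [Finset.mul_sum, ← Finset.sum_sub_distrib]
      exact Finset.sum_congr rfl fun τ _ => by ring
    rw [h2, hsum σ, mul_one, hS]
    congr 1
    exact Fintype.sum_equiv (Equiv.mulLeft σ) _ _ (fun τ => rfl)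
  rw [map_neg, key]
  ring

lemma mem_range_of_forall_fixed [IsGalois F E] [FiniteDimensional F E]
    (x : E) (hx : ∀ σ : E ≃ₐ[F] E, σ x = x) : x ∈ (algebraMap F E).range := by
  have hmem : x ∈ IntermediateField.fixedField
      (IntermediateField.fixingSubgroup (⊥ : IntermediateField F E)) := by
    intro σ
    exact hx σ
  rw [IsGalois.fixedField_fixingSubgroup, IntermediateField.mem_bot] at hmem
  obtain ⟨y, hy⟩ := hmem
  exact ⟨y, hy⟩

end Part2Aux

section Descent

variable (F E : Type*) [Field F] [Field E] [Algebra F E]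

lemma descent [IsGalois F E] [FiniteDimensional F E] {n : ℕ}
    (g : Matrix (Fin n) (Fin n) E) (hg : IsUnit g.det)
    (hfix : ∀ σ : E ≃ₐ[F] E, ∃ u : Matrix (Fin n) (Fin n) E,
      IsUnipotentUpperTriangular u ∧ g.map ⇑σ = u * g) :
    ∀ k : ℕ, ∃ u : Matrix (Fin n) (Fin n) E, IsUnipotentUpperTriangular u ∧
      ∀ (σ : E ≃ₐ[F] E) (i j : Fin n), n - k ≤ (i : ℕ) → σ ((u * g) i j) = (u * g) i j := by
  intro k
  induction k with
  | zero => exact ⟨1, UUT.one, fun σ i j h => absurd h (by have := i.isLt; omega)⟩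
  | succ k ih =>
    obtain ⟨u, hu, hrows⟩ := ih
    by_cases hkn : n ≤ k
    · exact ⟨u, hu, fun σ i j _ => hrows σ i j (by omega)⟩
    push_neg at hkn
    obtain ⟨i₀, hi₀v⟩ : ∃ i₀ : Fin n, (i₀ : ℕ) = n - (k + 1) := ⟨⟨n - (k + 1), by omega⟩, rfl⟩
    obtain ⟨g₁, hg₁⟩ : ∃ g₁, g₁ = u * g := ⟨_, rfl⟩
    have hdet₁ : IsUnit g₁.det := by
      rw [hg₁, Matrix.det_mul]; exact (UUT.isUnit_det hu).mul hg
    have hrows1 : ∀ (σ : E ≃ₐ[F] E) (i j : Fin n), n - k ≤ (i : ℕ) →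
        σ (g₁ i j) = g₁ i j := fun σ i j hi => by rw [hg₁]; exact hrows σ i j hi
    choose v hv1 hv2 using hfix
    obtain ⟨w, hwval⟩ : ∃ w : (E ≃ₐ[F] E) → Matrix (Fin n) (Fin n) E,
        ∀ σ, w σ = u.map ⇑σ * v σ * u⁻¹ := ⟨_, fun _ => rfl⟩
    have hmapu : ∀ σ : E ≃ₐ[F] E, IsUnipotentUpperTriangular (u.map ⇑σ) := fun σ =>
      ⟨fun i => by simp [Matrix.map_apply, hu.1 i],
       fun i j hij => by simp [Matrix.map_apply, hu.2 i j hij]⟩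
    have hwu : ∀ σ, IsUnipotentUpperTriangular (w σ) := fun σ =>
      hwval σ ▸ UUT.mul (UUT.mul (hmapu σ) (hv1 σ)) (UUT.inv hu)
    have hweq : ∀ σ : E ≃ₐ[F] E, g₁.map ⇑σ = w σ * g₁ := by
      intro σ
      rw [hg₁, hwval σ, map_mul_alg F E σ u g, hv2 σ,
        mul_assoc (u.map ⇑σ * v σ) u⁻¹ (u * g), ← mul_assoc u⁻¹ u g,
        Matrix.nonsing_inv_mul u (UUT.isUnit_det hu), one_mul, mul_assoc]
    -- rows ≥ n - k of w σ are identity rows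
    have hwrow : ∀ (σ : E ≃ₐ[F] E) (i : Fin n), n - k ≤ (i : ℕ) →
        ∀ m, w σ i m = (1 : Matrix (Fin n) (Fin n) E) i m := by
      intro σ i hi m
      have hws : w σ = g₁.map ⇑σ * g₁⁻¹ := by
        rw [hweq σ, mul_assoc, Matrix.mul_nonsing_inv g₁ hdet₁, mul_one]
      rw [hws, Matrix.mul_apply,
        show (∑ x, (g₁.map ⇑σ) i x * g₁⁻¹ x m) = ∑ x, g₁ i x * g₁⁻¹ x m from
          Finset.sum_congr rfl fun x _ => by rw [Matrix.map_apply, hrows1 σ i x hi],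
        ← Matrix.mul_apply, Matrix.mul_nonsing_inv g₁ hdet₁]
    -- the additive cocycle on row i₀
    obtain ⟨c, hcval⟩ : ∃ c : (E ≃ₐ[F] E) → Fin n → E,
        ∀ σ j, c σ j = w σ i₀ j - (1 : Matrix (Fin n) (Fin n) E) i₀ j := ⟨_, fun _ _ => rfl⟩
    have hone_fix : ∀ (σ : E ≃ₐ[F] E) (i j : Fin n),
        σ ((1 : Matrix (Fin n) (Fin n) E) i j) = (1 : Matrix (Fin n) (Fin n) E) i j := by
      intro σ i j
      by_cases h : i = j
      · subst h; rw [Matrix.one_apply_eq, map_one]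
      · rw [Matrix.one_apply_ne h, map_zero]
    have hwsplit : ∀ (σ : E ≃ₐ[F] E) (m : Fin n),
        w σ i₀ m = (1 : Matrix (Fin n) (Fin n) E) i₀ m + c σ m := by
      intro σ m; rw [hcval]; ring
    have hczero : ∀ (σ : E ≃ₐ[F] E) (m : Fin n), ¬ i₀ < m → c σ m = 0 := by
      intro σ m hm
      rcases lt_or_eq_of_le (not_lt.mp hm) with h' | h'
      · rw [hcval, (hwu σ).2 i₀ m h', Matrix.one_apply_ne (ne_of_gt h'), sub_zero]
      · rw [hcval, h', (hwu σ).1 i₀, Matrix.one_apply_eq, sub_self]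
    have hi₀lt : ∀ m : Fin n, i₀ < m → n - k ≤ (m : ℕ) := by
      intro m hm
      have h1 : (i₀ : ℕ) < (m : ℕ) := hm
      rw [hi₀v] at h1
      omega
    have hcoc : ∀ σ τ : E ≃ₐ[F] E, w (σ * τ) = (w τ).map ⇑σ * w σ := by
      intro σ τ
      have h1 : w (σ * τ) * g₁ = ((w τ).map ⇑σ * w σ) * g₁ := by
        rw [← hweq (σ * τ)]
        have h2 : g₁.map ⇑(σ * τ) = (g₁.map ⇑τ).map ⇑σ := by
          ext i j; simp [Matrix.map_apply]
        rw [h2, hweq τ, map_mul_alg, hweq σ, mul_assoc]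
      have h3 := congrArg (fun M => M * g₁⁻¹) h1
      simpa [mul_assoc, Matrix.mul_nonsing_inv g₁ hdet₁] using h3
    have hcc : ∀ (σ τ : E ≃ₐ[F] E) (j : Fin n), c (σ * τ) j = c σ j + σ (c τ j) := by
      intro σ τ j
      have h1 : w (σ * τ) i₀ j = ∑ m, σ (w τ i₀ m) * w σ m j := by
        rw [hcoc, Matrix.mul_apply]
        exact Finset.sum_congr rfl fun m _ => by rw [Matrix.map_apply]
      have h2 : ∀ m : Fin n, σ (w τ i₀ m) * w σ m j
          = (1 : Matrix (Fin n) (Fin n) E) i₀ m * w σ m j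
            + σ (c τ m) * (1 : Matrix (Fin n) (Fin n) E) m j := by
        intro m
        rw [hwsplit τ m, map_add, hone_fix, add_mul]
        congr 1
        by_cases hm : i₀ < m
        · rw [hwrow σ m (hi₀lt m hm) j]
        · rw [hczero τ m hm, map_zero, zero_mul, zero_mul]
      have h3 : (∑ m, (1 : Matrix (Fin n) (Fin n) E) i₀ m * w σ m j) = w σ i₀ j := by
        rw [← Matrix.mul_apply, one_mul]
      have h4 : (∑ m, σ (c τ m) * (1 : Matrix (Fin n) (Fin n) E) m j) = σ (c τ j) := by
        rw [Finset.sum_eq_single j]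
        · rw [Matrix.one_apply_eq, mul_one]
        · intro m _ hm; rw [Matrix.one_apply_ne hm, mul_zero]
        · exact fun h => absurd (Finset.mem_univ j) h
      have h5 : w (σ * τ) i₀ j = w σ i₀ j + σ (c τ j) := by
        rw [h1, Finset.sum_congr rfl (fun m _ => h2 m), Finset.sum_add_distrib, h3, h4]
      rw [hcval (σ * τ) j, h5, hcval σ j]
      ring
    -- Hilbert 90 componentwise
    have hbex : ∀ j : Fin n, ∃ b : E, ∀ σ : E ≃ₐ[F] E, c σ j = σ b - b := fun j =>
      hilbert90_additive F E (fun σ => c σ j) (fun σ τ => hcc σ τ j)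
    choose b hb using hbex
    obtain ⟨d, hdval⟩ : ∃ d : Fin n → E, ∀ j, d j = if i₀ < j then b j else 0 := ⟨_, fun _ => rfl⟩
    have hdc : ∀ (σ : E ≃ₐ[F] E) (j : Fin n), c σ j = σ (d j) - d j := by
      intro σ j
      by_cases h : i₀ < j
      · rw [hdval j, if_pos h]; exact hb j σ
      · rw [hdval j, if_neg h, map_zero, sub_zero, hczero σ j h]
    have hd0 : d i₀ = 0 := by rw [hdval, if_neg (lt_irrefl i₀)]
    obtain ⟨M, hMval⟩ : ∃ M : Matrix (Fin n) (Fin n) E,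
        ∀ i j, M i j = if i = i₀ then d j else 0 := ⟨Matrix.of _, fun _ _ => rfl⟩
    have hvmat : IsUnipotentUpperTriangular (1 - M) := by
      constructor
      · intro i
        rw [Matrix.sub_apply, Matrix.one_apply_eq, hMval]
        by_cases h : i = i₀
        · rw [if_pos h, h, hd0, sub_zero]
        · rw [if_neg h, sub_zero]
      · intro i j hij
        rw [Matrix.sub_apply, Matrix.one_apply_ne (ne_of_gt hij), hMval]
        by_cases h : i = i₀
        · rw [if_pos h, hdval j, if_neg (lt_asymm (h ▸ hij)), sub_zero]
        · rw [if_neg h, sub_zero]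
    refine ⟨(1 - M) * u, UUT.mul hvmat hu, ?_⟩
    have hassoc : (1 - M) * u * g = (1 - M) * g₁ := by rw [mul_assoc, hg₁]
    have hentry : ∀ i j : Fin n, ((1 - M) * g₁) i j
        = g₁ i j - ∑ m, M i m * g₁ m j := by
      intro i j
      rw [sub_mul, one_mul, Matrix.sub_apply, Matrix.mul_apply]
    intro σ i j hi
    rw [hassoc, hentry]
    by_cases h : i = i₀
    · rw [h]
      have hMent : ∀ m, M i₀ m = d m := fun m => by rw [hMval, if_pos rfl]
      rw [Finset.sum_congr rfl (fun m _ => by rw [hMent m])]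
      have hg1row : σ (g₁ i₀ j) = g₁ i₀ j + ∑ m, c σ m * g₁ m j := by
        have h0 : σ (g₁ i₀ j) = (g₁.map ⇑σ) i₀ j := rfl
        rw [h0, hweq σ, Matrix.mul_apply,
          Finset.sum_congr rfl (fun m _ => by rw [hwsplit σ m, add_mul]),
          Finset.sum_add_distrib, ← Matrix.mul_apply, one_mul]
      have hterm : ∀ m : Fin n, σ (d m * g₁ m j) = (d m + c σ m) * g₁ m j := by
        intro m
        by_cases hm : i₀ < m
        · rw [map_mul, hrows1 σ m j (hi₀lt m hm)]
          congr 1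
          rw [show σ (d m) = d m + c σ m from by rw [hdc σ m]; ring]
        · rw [hdval m, if_neg hm, zero_mul, map_zero, hczero σ m hm, add_zero, zero_mul]
      rw [map_sub σ, map_sum σ (fun m => d m * g₁ m j) Finset.univ, hg1row,
        Finset.sum_congr rfl (fun m _ => hterm m),
        Finset.sum_congr rfl (fun (m : Fin n) (_ : m ∈ Finset.univ) =>
          (add_mul (d m) (c σ m) (g₁ m j))),
        Finset.sum_add_distrib]
      ring
    · have hMent : ∀ m, M i m = 0 := fun m => by rw [hMval, if_neg h]
      rw [Finset.sum_congr rfl (fun m _ => by rw [hMent m, zero_mul]),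
        Finset.sum_const_zero, sub_zero]
      refine hrows1 σ i j ?_
      have hne : (i : ℕ) ≠ n - (k + 1) := fun hc => h (Fin.ext (by rw [hc, hi₀v]))
      have := i.isLt
      omega

end Descent

/-- The natural map `N_n(F)g ↦ N_n(E)g` is a bijection from `N_n(F)\GL_n(F)` onto the
`Γ`-fixed points of `N_n(E)\GL_n(E)`, for `E/F` Galois of prime degree `l` with
`Γ = Gal(E/F)`. Concretely: (i) for `g, g' ∈ GL_n(F)`, `N_n(E)g = N_n(E)g'` iff
`N_n(F)g = N_n(F)g'` (injectivity), and (ii) if `g ∈ GL_n(E)` has `Γ`-fixed coset,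
i.e. `σ(g) = u_σ g` with `u_σ ∈ N_n(E)` for all `σ ∈ Γ`, then `u·g` has all entries in
`F` for some `u ∈ N_n(E)` (surjectivity). -/
theorem coset_space_fixed_points
    (F E : Type*) [Field F] [Field E] [Algebra F E] [IsGalois F E]
    (l : ℕ) (hl : l.Prime) (hrank : Module.finrank F E = l) (n : ℕ) :
    (∀ g g' : Matrix (Fin n) (Fin n) F, IsUnit g.det → IsUnit g'.det →
      ((∃ u : Matrix (Fin n) (Fin n) E, IsUnipotentUpperTriangular u ∧
          g.map ⇑(algebraMap F E) = u * g'.map ⇑(algebraMap F E)) ↔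
        ∃ u : Matrix (Fin n) (Fin n) F, IsUnipotentUpperTriangular u ∧ g = u * g')) ∧
    (∀ g : Matrix (Fin n) (Fin n) E, IsUnit g.det →
      (∀ σ : E ≃ₐ[F] E, ∃ u : Matrix (Fin n) (Fin n) E,
        IsUnipotentUpperTriangular u ∧ g.map ⇑σ = u * g) →
      ∃ u : Matrix (Fin n) (Fin n) E, IsUnipotentUpperTriangular u ∧
        ∀ i j, (u * g) i j ∈ (algebraMap F E).range) := by
  haveI : FiniteDimensional F E :=
    FiniteDimensional.of_finrank_pos (by rw [hrank]; exact hl.pos)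
  constructor
  · intro g g' hg hg'
    constructor
    · rintro ⟨u, hu, heq⟩
      have hfinj : Function.Injective ⇑(algebraMap F E) := (algebraMap F E).injective
      have hdet' : IsUnit ((g'.map ⇑(algebraMap F E)).det) := by
        have hdm : (g'.map ⇑(algebraMap F E)).det = algebraMap F E g'.det := by
          rw [← RingHom.mapMatrix_apply, ← RingHom.map_det]
        rw [hdm]; exact hg'.map (algebraMap F E)
      have hkey : u = (g * g'⁻¹).map ⇑(algebraMap F E) := by
        have h1 : (g * g'⁻¹).map ⇑(algebraMap F E) * g'.map ⇑(algebraMap F E)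
            = g.map ⇑(algebraMap F E) := by
          rw [← Matrix.map_mul, mul_assoc, Matrix.nonsing_inv_mul g' hg', mul_one]
        have h2 : u * g'.map ⇑(algebraMap F E)
            = (g * g'⁻¹).map ⇑(algebraMap F E) * g'.map ⇑(algebraMap F E) := by
          rw [h1, heq]
        have h3 := congrArg (fun M => M * (g'.map ⇑(algebraMap F E))⁻¹) h2
        simpa [mul_assoc, Matrix.mul_nonsing_inv _ hdet'] using h3
      refine ⟨g * g'⁻¹, ⟨?_, ?_⟩,
        by rw [mul_assoc, Matrix.nonsing_inv_mul g' hg', mul_one]⟩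
      · intro i
        apply hfinj
        rw [map_one]
        have h4 := hu.1 i
        rw [hkey] at h4
        exact h4
      · intro i j hij
        apply hfinj
        rw [map_zero]
        have h4 := hu.2 i j hij
        rw [hkey] at h4
        exact h4
    · rintro ⟨u, hu, heq⟩
      refine ⟨u.map ⇑(algebraMap F E), ⟨fun i => by rw [Matrix.map_apply, hu.1 i, map_one],
        fun i j hij => by rw [Matrix.map_apply, hu.2 i j hij, map_zero]⟩, ?_⟩
      rw [heq, Matrix.map_mul]
  · intro g hg hfix
    obtain ⟨u, hu, hfixed⟩ := descent F E g hg hfix n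
    exact ⟨u, hu, fun i j =>
      mem_range_of_forall_fixed F E _ (fun σ => hfixed σ i j (by omega))⟩
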